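/- Retrodicting a Z-basis measurement with the Pauli-eigenstate ensemble belief: let S be a qubit, E_{0/1} the CPTP map from S to a two-dimensional classical system T given by E_{0/1}(ρ) = ⟨0|ρ|0⟩ |0̃⟩⟨0̃| + ⟨1|ρ|1⟩ |1̃⟩⟨1̃|, and let β_XYZ = (1/6) Σ_{s∈{0,1,+,−,+i,−i}} |s⟩⟨s|⊗|s̄⟩⟨s̄| on S⊗R, where |0⟩,|1⟩,|±⟩ = (|0⟩±|1⟩)/√2, |±i⟩ = (|0⟩±i|1⟩)/√2 are the six Pauli eigenstates and {|s̄⟩} is an orthonormal basis of a six-dimensional classical system R. Then R_ext^{E_{0/1},β_XYZ}(|0̃⟩⟨0̃|) = (|0⟩⟨0| + 1_S)/3 and R_ext^{E_{0/1},β_XYZ}(|1̃⟩⟨1̃|) = (|1⟩⟨1| + 1_S)/3. -/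

import Mathlib

open Matrix
open scoped Kronecker ComplexOrder


open Classical in
/-- The positive semidefinite square root of a matrix (zero if not PSD). -/
noncomputable def msqrt {n : Type*} [Fintype n] [DecidableEq n] (A : Matrix n n ℂ) :
    Matrix n n ℂ :=
  if h : A.PosSemidef then
    h.1.eigenvectorUnitary.1 * diagonal (((↑) : ℝ → ℂ) ∘ Real.sqrt ∘ h.1.eigenvalues) *
      (star h.1.eigenvectorUnitary : Matrix n n ℂ)
  else 0

/-- `A^{-1/2}`: the (nonsingular) inverse of the PSD square root. -/
noncomputable def invsqrt {n : Type*} [Fintype n] [DecidableEq n] (A : Matrix n n ℂ) :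
    Matrix n n ℂ :=
  (msqrt A)⁻¹

/-- Partial trace over the second factor `R`. -/
noncomputable def ptraceR {S R : Type*} [Fintype R] (M : Matrix (S × R) (S × R) ℂ) : Matrix S S ℂ :=
  Matrix.of fun s s' => ∑ r, M (s, r) (s', r)

/-- A density matrix: positive semidefinite with unit trace. -/
def IsDensity {n : Type*} [Fintype n] (A : Matrix n n ℂ) : Prop :=
  A.PosSemidef ∧ A.trace = 1

/-- The Choi matrix of a linear map between matrix algebras. -/
def choi {S T : Type*} [Fintype S] [DecidableEq S]
    (E : Matrix S S ℂ →ₗ[ℂ] Matrix T T ℂ) : Matrix (S × T) (S × T) ℂ :=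
  Matrix.of fun p q => E (Matrix.single p.1 q.1 1) p.2 q.2

/-- Completely positive trace-preserving map. -/
def IsCPTP {S T : Type*} [Fintype S] [DecidableEq S] [Fintype T]
    (E : Matrix S S ℂ →ₗ[ℂ] Matrix T T ℂ) : Prop :=
  (∀ X, (E X).trace = X.trace) ∧ (choi E).PosSemidef

/-- The Hilbert-Schmidt adjoint `E†`, satisfying `Tr[E(X)† Y] = Tr[X† E†(Y)]`. -/
noncomputable def adjMap {S T : Type*} [Fintype S] [DecidableEq S] [Fintype T]
    (E : Matrix S S ℂ →ₗ[ℂ] Matrix T T ℂ) (Y : Matrix T T ℂ) : Matrix S S ℂ :=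
  Matrix.of fun i j => ((E (Matrix.single i j 1))ᴴ * Y).trace

/-- The original Petz map `R^{E,βS}(σ) = √βS E†(E(βS)^{-1/2} σ E(βS)^{-1/2}) √βS`. -/
noncomputable def petz {S T : Type*} [Fintype S] [DecidableEq S] [Fintype T] [DecidableEq T]
    (E : Matrix S S ℂ →ₗ[ℂ] Matrix T T ℂ) (βS : Matrix S S ℂ) (σ : Matrix T T ℂ) :
    Matrix S S ℂ :=
  msqrt βS * adjMap E (invsqrt (E βS) * σ * invsqrt (E βS)) * msqrt βS

/-- The prior-extended Petz map `R^{E⊗Tr,β}`. -/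
noncomputable def petzExt {S R T : Type*} [Fintype S] [DecidableEq S]
    [Fintype R] [DecidableEq R] [Fintype T] [DecidableEq T]
    (E : Matrix S S ℂ →ₗ[ℂ] Matrix T T ℂ) (β : Matrix (S × R) (S × R) ℂ)
    (σ : Matrix T T ℂ) : Matrix (S × R) (S × R) ℂ :=
  msqrt β *
    (adjMap E (invsqrt (E (ptraceR β)) * σ * invsqrt (E (ptraceR β))) ⊗ₖ (1 : Matrix R R ℂ)) *
    msqrt β

/-- The retrodiction map `R_ext^{E,β} = Tr_R ∘ R^{E⊗Tr,β}`. -/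
noncomputable def retroExt {S R T : Type*} [Fintype S] [DecidableEq S]
    [Fintype R] [DecidableEq R] [Fintype T] [DecidableEq T]
    (E : Matrix S S ℂ →ₗ[ℂ] Matrix T T ℂ) (β : Matrix (S × R) (S × R) ℂ)
    (σ : Matrix T T ℂ) : Matrix S S ℂ :=
  ptraceR (petzExt E β σ)

/-- Two beliefs are equivalent if they induce the same retrodiction map for all channels. -/
def EquivBeliefs {S R₁ R₂ : Type*} [Fintype S] [DecidableEq S]
    [Fintype R₁] [DecidableEq R₁] [Fintype R₂] [DecidableEq R₂]
    (β : Matrix (S × R₁) (S × R₁) ℂ) (γ : Matrix (S × R₂) (S × R₂) ℂ) : Prop :=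
  ∀ (T : Type) (_ : Fintype T) (_ : DecidableEq T)
    (E : Matrix S S ℂ →ₗ[ℂ] Matrix T T ℂ),
    IsCPTP E → (E (ptraceR β)).PosDef → (E (ptraceR γ)).PosDef →
    ∀ σ : Matrix T T ℂ, retroExt E β σ = retroExt E γ σ

/-- Measurement in the basis `{v₀, v₁}`, recorded in the standard basis of a classical bit. -/
noncomputable def meas2 (v₀ v₁ : Fin 2 → ℂ) :
    Matrix (Fin 2) (Fin 2) ℂ →ₗ[ℂ] Matrix (Fin 2) (Fin 2) ℂ where
  toFun ρ := (∑ i, ∑ j, star (v₀ i) * ρ i j * v₀ j) • Matrix.single 0 0 1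
      + (∑ i, ∑ j, star (v₁ i) * ρ i j * v₁ j) • Matrix.single 1 1 1
  map_add' x y := by
    simp only [Matrix.add_apply, mul_add, add_mul, Finset.sum_add_distrib, add_smul]
    abel
  map_smul' c x := by
    have h : ∀ v : Fin 2 → ℂ,
        (∑ i, ∑ j, star (v i) * ((c • x) i j) * v j)
          = c * ∑ i, ∑ j, star (v i) * x i j * v j := by
      intro v
      rw [Finset.mul_sum]
      refine Finset.sum_congr rfl fun i _ => ?_
      rw [Finset.mul_sum]
      refine Finset.sum_congr rfl fun j _ => ?_
      simp only [Matrix.smul_apply, smul_eq_mul]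
      ring
    simp only [RingHom.id_apply, smul_add, smul_smul]
    rw [h, h]

/-- The qubit state `|0⟩`. -/
noncomputable def q0 : Fin 2 → ℂ := ![1, 0]
/-- The qubit state `|1⟩`. -/
noncomputable def q1 : Fin 2 → ℂ := ![0, 1]
/-- The qubit state `|+⟩ = (|0⟩+|1⟩)/√2`. -/
noncomputable def qP : Fin 2 → ℂ := ![(Real.sqrt 2 : ℂ)⁻¹, (Real.sqrt 2 : ℂ)⁻¹]
/-- The qubit state `|−⟩ = (|0⟩−|1⟩)/√2`. -/
noncomputable def qM : Fin 2 → ℂ := ![(Real.sqrt 2 : ℂ)⁻¹, -(Real.sqrt 2 : ℂ)⁻¹]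
/-- The qubit state `|+i⟩ = (|0⟩+i|1⟩)/√2`. -/
noncomputable def qPi : Fin 2 → ℂ := ![(Real.sqrt 2 : ℂ)⁻¹, Complex.I * (Real.sqrt 2 : ℂ)⁻¹]
/-- The qubit state `|−i⟩ = (|0⟩−i|1⟩)/√2`. -/
noncomputable def qMi : Fin 2 → ℂ := ![(Real.sqrt 2 : ℂ)⁻¹, -(Complex.I * (Real.sqrt 2 : ℂ)⁻¹)]
/-- The rank-one projector `|v⟩⟨v|`. -/
noncomputable def proj (v : Fin 2 → ℂ) : Matrix (Fin 2) (Fin 2) ℂ :=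
  Matrix.vecMulVec v (star v)

/-- The six Pauli eigenstates indexed by `Fin 6`. -/
noncomputable def pauliState : Fin 6 → Fin 2 → ℂ := ![q0, q1, qP, qM, qPi, qMi]

/-- The Pauli-eigenstate ensemble belief `β_XYZ` on `S ⊗ R` with `R` six-dimensional. -/
noncomputable def betaXYZ : Matrix (Fin 2 × Fin 6) (Fin 2 × Fin 6) ℂ :=
  (1 / 6 : ℂ) • ∑ s : Fin 6, proj (pauliState s) ⊗ₖ Matrix.single s s (1 : ℂ)

/-!
The belief is block diagonal in the classical register, `β = 6⁻¹ ∑ₛ Pₛ ⊗ |s̄⟩⟨s̄|` with rank-one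
projectors `Pₛ = |s⟩⟨s|`, and such operators multiply block by block. Hence
`√β = (√6)⁻¹ ∑ₛ Pₛ ⊗ |s̄⟩⟨s̄|`, and tracing out `R` leaves `6⁻¹ ∑ₛ Pₛ E†(…) Pₛ`. The six states
form three orthonormal bases, so `β_S = 1/2`; as `E_{0/1}` is unital, `E(β_S)^{-1/2} = √2`, and
the retrodiction of `σ` is `3⁻¹ ∑ₛ Pₛ E†(σ) Pₛ`. Finally `E†` fixes `|a⟩⟨a|` and
`Pₛ |a⟩⟨a| Pₛ = |⟨a|s⟩|² Pₛ`: the `Z` basis contributes `|a⟩⟨a|`, while the `X` and `Y` bases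
are unbiased with respect to it, contributing `(Pₛ + Pₛ')/2 = 1/2` each.
-/

open scoped MatrixOrder in
theorem msqrt_eq_of_mul_self {n : Type*} [Fintype n] [DecidableEq n] {A B : Matrix n n ℂ}
    (hA : A.PosSemidef) (hB : B.PosSemidef) (h : B * B = A) : msqrt A = B := by
  rw [msqrt, dif_pos hA, ← CFC.sqrt_unique h hB.nonneg, CFC.sqrt_eq_cfc, cfc_nnreal_eq_real _ A,
    hA.1.cfc_eq, IsHermitian.cfc, Unitary.conjStarAlgAut_apply]
  congr 3
  funext i
  simp [Real.coe_sqrt, hA.eigenvalues_nonneg i]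

theorem msqrt_smul_of_mul_self {n : Type*} [Fintype n] [DecidableEq n] {P : Matrix n n ℂ}
    (hP : P.PosSemidef) (hPP : P * P = P) {c : ℝ} (hc : 0 ≤ c) :
    msqrt ((c : ℂ) • P) = (√c : ℂ) • P := by
  refine msqrt_eq_of_mul_self (hP.smul (by exact_mod_cast hc))
    (hP.smul (by exact_mod_cast Real.sqrt_nonneg c)) ?_
  rw [smul_mul_smul_comm, hPP, ← Complex.ofReal_mul, Real.mul_self_sqrt hc]

theorem invsqrt_smul_one {n : Type*} [Fintype n] [DecidableEq n] {c : ℝ} (hc : 0 < c) :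
    invsqrt ((c : ℂ) • (1 : Matrix n n ℂ)) = ((√c)⁻¹ : ℂ) • 1 := by
  rw [invsqrt, msqrt_smul_of_mul_self PosSemidef.one (mul_one 1) hc.le]
  refine inv_eq_right_inv ?_
  rw [smul_mul_smul_comm, one_mul, mul_inv_cancel₀ (by exact_mod_cast (Real.sqrt_pos.2 hc).ne'),
    one_smul]

theorem adjMap_smul {S T : Type*} [Fintype S] [DecidableEq S] [Fintype T]
    (E : Matrix S S ℂ →ₗ[ℂ] Matrix T T ℂ) (c : ℂ) (Y : Matrix T T ℂ) :
    adjMap E (c • Y) = c • adjMap E Y := by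
  ext i j
  simp [adjMap, Matrix.mul_smul, Matrix.trace_smul]

theorem ptraceR_smul {S R : Type*} [Fintype R] (c : ℂ) (M : Matrix (S × R) (S × R) ℂ) :
    ptraceR (c • M) = c • ptraceR M := by
  ext i j
  simp [ptraceR, Finset.mul_sum]

section ClassicalQuantum

variable {n ι : Type*} [Fintype ι] [DecidableEq ι]

noncomputable def cqSum (ρ : ι → Matrix n n ℂ) : Matrix (n × ι) (n × ι) ℂ :=
  ∑ i, ρ i ⊗ₖ single i i (1 : ℂ)

theorem cqSum_mul_cqSum [Fintype n] (ρ σ : ι → Matrix n n ℂ) :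
    cqSum ρ * cqSum σ = cqSum fun i => ρ i * σ i := by
  simp only [cqSum, Finset.sum_mul, Finset.mul_sum, ← mul_kronecker_mul]
  refine Finset.sum_congr rfl fun i _ => ?_
  rw [Finset.sum_eq_single i]
  · rw [single_mul_single_same, one_mul]
  · intro j _ hji
    rw [single_mul_single_of_ne (h := hji), kronecker_zero]
  · simp

theorem kronecker_one_eq_cqSum (A : Matrix n n ℂ) :
    A ⊗ₖ (1 : Matrix ι ι ℂ) = cqSum fun _ => A := by
  ext ⟨i, r⟩ ⟨j, r'⟩
  simp [cqSum, Matrix.sum_apply, kroneckerMap_apply, single, one_apply, ite_and]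

theorem ptraceR_cqSum (ρ : ι → Matrix n n ℂ) : ptraceR (cqSum ρ) = ∑ i, ρ i := by
  ext s s'
  simp [ptraceR, cqSum, Matrix.sum_apply, kroneckerMap_apply, single]

theorem posSemidef_cqSum [Fintype n] [DecidableEq n] {ρ : ι → Matrix n n ℂ}
    (hρ : ∀ i, (ρ i).PosSemidef) : (cqSum ρ).PosSemidef :=
  Finset.sum_induction _ _ (fun _ _ => PosSemidef.add) PosSemidef.zero fun i _ =>
    (hρ i).kronecker <|
      diagonal_single i (1 : ℂ) ▸ PosSemidef.diagonal (Pi.single_nonneg.2 zero_le_one)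

end ClassicalQuantum

theorem proj_mul_self {v : Fin 2 → ℂ} (hv : star v ⬝ᵥ v = 1) : proj v * proj v = proj v := by
  rw [proj, vecMulVec_mul_vecMulVec, hv, one_smul]

theorem proj_mul_mul_proj (v : Fin 2 → ℂ) (A : Matrix (Fin 2) (Fin 2) ℂ) :
    proj v * A * proj v = (star v ⬝ᵥ A *ᵥ v) • proj v := by
  rw [proj, vecMulVec_mul, vecMulVec_mul_vecMulVec, vecMulVec_smul, dotProduct_mulVec]

theorem inv_sqrt_two_mul_self : (√2 : ℂ)⁻¹ * (√2 : ℂ)⁻¹ = 2⁻¹ := by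
  rw [← mul_inv, ← Complex.ofReal_mul, Real.mul_self_sqrt zero_le_two, Complex.ofReal_ofNat]

theorem star_mul_self_of_unbiased {v : Fin 2 → ℂ} (hv : v ∈ ({qP, qM, qPi, qMi} : Set _))
    (a : Fin 2) : star (v a) * v a = 2⁻¹ := by
  rcases hv with rfl | rfl | rfl | rfl <;> fin_cases a <;>
    simp [qP, qM, qPi, qMi, Complex.conj_ofReal, inv_sqrt_two_mul_self,
      mul_mul_mul_comm Complex.I, Complex.I_mul_I]

theorem star_dotProduct_self_pauliState (s : Fin 6) :
    star (pauliState s) ⬝ᵥ pauliState s = 1 := by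
  fin_cases s
  · simp [pauliState, q0, dotProduct]
  · simp [pauliState, q1, dotProduct]
  all_goals
    simp only [dotProduct, Fin.sum_univ_two, Pi.star_apply]
    rw [star_mul_self_of_unbiased (by simp [pauliState]),
      star_mul_self_of_unbiased (by simp [pauliState])]
    norm_num

theorem proj_q0_add_proj_q1 : proj q0 + proj q1 = 1 := by
  ext i j
  simp only [Matrix.add_apply, proj, vecMulVec_apply, Pi.star_apply]
  fin_cases i <;> fin_cases j <;> simp [q0, q1]

theorem proj_qP_add_proj_qM : proj qP + proj qM = 1 := by
  ext i j
  simp only [Matrix.add_apply, proj, vecMulVec_apply, Pi.star_apply]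
  fin_cases i <;> fin_cases j <;>
    simp [qP, qM, Complex.conj_ofReal, inv_sqrt_two_mul_self] <;> norm_num

theorem proj_qPi_add_proj_qMi : proj qPi + proj qMi = 1 := by
  ext i j
  simp only [Matrix.add_apply, proj, vecMulVec_apply, Pi.star_apply]
  fin_cases i <;> fin_cases j <;>
    simp [qPi, qMi, Complex.conj_ofReal, inv_sqrt_two_mul_self,
      mul_mul_mul_comm Complex.I, Complex.I_mul_I] <;> norm_num

theorem sum_proj_pauliState : ∑ s, proj (pauliState s) = (3 : ℂ) • 1 := by
  rw [Fin.sum_univ_six]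
  change proj q0 + proj q1 + proj qP + proj qM + proj qPi + proj qMi = _
  rw [add_assoc _ (proj qP), add_assoc _ (proj qPi), proj_q0_add_proj_q1, proj_qP_add_proj_qM,
    proj_qPi_add_proj_qMi]
  module

theorem proj_mul_single_mul_proj (v : Fin 2 → ℂ) (a : Fin 2) :
    proj v * single a a 1 * proj v = (star (v a) * v a) • proj v := by
  rw [proj_mul_mul_proj, single_mulVec_eq, dotProduct_smul, dotProduct_single, one_mul, mul_one,
    smul_eq_mul, mul_comm, Pi.star_apply]

theorem sum_proj_mul_single_mul_proj (a : Fin 2) :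
    ∑ s, proj (pauliState s) * single a a 1 * proj (pauliState s) = single a a 1 + 1 := by
  have z_basis : proj q0 * single a a 1 * proj q0 + proj q1 * single a a 1 * proj q1
      = single a a 1 := by
    rw [proj_mul_single_mul_proj, proj_mul_single_mul_proj]
    ext i j
    simp only [Matrix.add_apply, Matrix.smul_apply, proj, vecMulVec_apply, Pi.star_apply]
    fin_cases a <;> fin_cases i <;> fin_cases j <;> simp [q0, q1, single]
  have unbiased_basis {v w : Fin 2 → ℂ} (hv : v ∈ ({qP, qM, qPi, qMi} : Set _))
      (hw : w ∈ ({qP, qM, qPi, qMi} : Set _)) (hvw : proj v + proj w = 1) :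
      proj v * single a a 1 * proj v + proj w * single a a 1 * proj w = (2⁻¹ : ℂ) • 1 := by
    rw [proj_mul_single_mul_proj, proj_mul_single_mul_proj, star_mul_self_of_unbiased hv,
      star_mul_self_of_unbiased hw, ← smul_add, hvw]
  rw [Fin.sum_univ_six]
  change proj q0 * single a a 1 * proj q0 + proj q1 * single a a 1 * proj q1
    + proj qP * single a a 1 * proj qP + proj qM * single a a 1 * proj qM
    + proj qPi * single a a 1 * proj qPi + proj qMi * single a a 1 * proj qMi = _
  rw [add_assoc _ (proj qP * _ * _), add_assoc _ (proj qPi * _ * _), z_basis,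
    unbiased_basis (by simp) (by simp) proj_qP_add_proj_qM,
    unbiased_basis (by simp) (by simp) proj_qPi_add_proj_qMi, add_assoc, ← add_smul]
  norm_num

theorem meas2_q0_q1_one : meas2 q0 q1 1 = 1 := by
  ext i j
  fin_cases i <;> fin_cases j <;> simp [meas2, q0, q1, Fin.sum_univ_two, single, one_apply]

theorem adjMap_meas2_q0_q1_single (a : Fin 2) :
    adjMap (meas2 q0 q1) (single a a 1) = single a a 1 := by
  ext i j
  fin_cases a <;> fin_cases i <;> fin_cases j <;>
    simp [adjMap, meas2, trace, mul_apply, single, q0, q1, Fin.sum_univ_two]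

theorem betaXYZ_eq_cqSum :
    betaXYZ = ((6⁻¹ : ℝ) : ℂ) • cqSum fun s => proj (pauliState s) := by
  rw [betaXYZ, cqSum]
  norm_num

theorem msqrt_betaXYZ :
    msqrt betaXYZ = (√(6⁻¹) : ℂ) • cqSum fun s => proj (pauliState s) := by
  rw [betaXYZ_eq_cqSum]
  refine msqrt_smul_of_mul_self
    (posSemidef_cqSum fun s => posSemidef_vecMulVec_self_star _) ?_ (by norm_num)
  rw [cqSum_mul_cqSum]
  exact congrArg cqSum (funext fun s => proj_mul_self (star_dotProduct_self_pauliState s))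

theorem ptraceR_betaXYZ : ptraceR betaXYZ = ((2⁻¹ : ℝ) : ℂ) • 1 := by
  rw [betaXYZ_eq_cqSum, ptraceR_smul, ptraceR_cqSum, sum_proj_pauliState, smul_smul]
  norm_num

theorem retroExt_betaXYZ_of_map_one {T : Type*} [Fintype T] [DecidableEq T]
    (E : Matrix (Fin 2) (Fin 2) ℂ →ₗ[ℂ] Matrix T T ℂ) (hE : E 1 = 1) (σ : Matrix T T ℂ) :
    retroExt E betaXYZ σ
      = (3⁻¹ : ℂ) • ∑ s, proj (pauliState s) * adjMap E σ * proj (pauliState s) := by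
  have hβS : E (ptraceR betaXYZ) = ((2⁻¹ : ℝ) : ℂ) • 1 := by
    rw [ptraceR_betaXYZ, map_smul, hE]
  rw [retroExt, petzExt, hβS, invsqrt_smul_one (by norm_num), msqrt_betaXYZ]
  simp only [Matrix.smul_mul, Matrix.mul_smul, one_mul, mul_one, smul_smul, adjMap_smul,
    smul_kronecker, kronecker_one_eq_cqSum, cqSum_mul_cqSum, ptraceR_smul, ptraceR_cqSum]
  congr 1
  have h6 : (√6⁻¹ : ℂ) * √6⁻¹ = 6⁻¹ := by
    rw [← Complex.ofReal_mul, Real.mul_self_sqrt (by norm_num)]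
    push_cast
    rfl
  have h2 : ((√2⁻¹ : ℂ))⁻¹ * ((√2⁻¹ : ℂ))⁻¹ = 2 := by
    rw [← mul_inv, ← Complex.ofReal_mul, Real.mul_self_sqrt (by norm_num)]
    push_cast
    norm_num
  linear_combination ((√2⁻¹ : ℂ))⁻¹ * ((√2⁻¹ : ℂ))⁻¹ * h6 + 6⁻¹ * h2

/-- Retrodicting a Z-basis measurement with the Pauli-eigenstate
ensemble belief gives `(|0⟩⟨0|+1)/3` and `(|1⟩⟨1|+1)/3` respectively. -/
theorem retro_measZ_pauli_ensemble :
    retroExt (meas2 q0 q1) betaXYZ (Matrix.single (0 : Fin 2) 0 (1 : ℂ))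
      = (1 / 3 : ℂ) • (Matrix.single (0 : Fin 2) 0 (1 : ℂ)
          + (1 : Matrix (Fin 2) (Fin 2) ℂ)) ∧
    retroExt (meas2 q0 q1) betaXYZ (Matrix.single (1 : Fin 2) 1 (1 : ℂ))
      = (1 / 3 : ℂ) • (Matrix.single (1 : Fin 2) 1 (1 : ℂ)
          + (1 : Matrix (Fin 2) (Fin 2) ℂ)) := by
  have retro_single (a : Fin 2) :
      retroExt (meas2 q0 q1) betaXYZ (single a a 1) = (1 / 3 : ℂ) • (single a a 1 + 1) := by
    rw [retroExt_betaXYZ_of_map_one _ meas2_q0_q1_one, adjMap_meas2_q0_q1_single,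
      sum_proj_mul_single_mul_proj, one_div]
  exact ⟨retro_single 0, retro_single 1⟩
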